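/- Assume α_k → ∞ and ε_k → 0, and let the sequences satisfy the inexact penalty KKT conditions for every k. If K ⊆ ℕ is infinite and x^k → x* along K, then there exist an infinite subset K′ ⊆ K and a point y* ∈ ℝⁿ such that y^k → y* along K′ and x*_i·y*_i = 0 for every i = 1, …, n. -/

import Mathlib

/-!
Stationarity in `y` together with the complementarity `min (y_i, ν_y,i) ≤ ε` gives
`p_i'(y_i) + α x_i ≤ 2ε` whenever `y_i > ε`. As `p_i'` is monotone and positive to the right of
the strict minimiser `s_i`, this keeps `y^k` in a fixed box for large `k`, so some subsequence of
`(y^k)_{k ∈ K}` converges, to `y*` say. If `x*_i` and `y*_i` were both positive, then eventually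
`y_i^k > ε_k` along it, and `p_i'(0) + α_k x_i^k ≤ 2ε_k` would contradict `α_k x_i^k → ∞`.
-/
open Filter Topology

noncomputable section

/-- Euclidean n-space. -/
abbrev E (n : ℕ) : Type := EuclideanSpace ℝ (Fin n)

/-- Regard a plain function as a vector of Euclidean space. -/
def vec {ι : Type*} [Fintype ι] (v : ι → ℝ) : EuclideanSpace ℝ ι :=
  (WithLp.equiv 2 (ι → ℝ)).symm v

/-- The inexact penalty KKT conditions at stage k (step 2 of the exact penalty
algorithm). -/
def inexactKKT {n m q : ℕ} (f : E n → ℝ) (g : Fin m → E n → ℝ) (h : Fin q → E n → ℝ)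
    (p : Fin n → ℝ → ℝ) (α ε : ℝ)
    (x y : E n) (νx νy : E n) (lam : Fin m → ℝ) (mu : Fin q → ℝ) : Prop :=
  (∀ i, 0 ≤ x i) ∧ (∀ i, 0 ≤ y i) ∧ (∀ i, 0 ≤ lam i) ∧
  (∀ i, 0 ≤ νx i) ∧ (∀ i, 0 ≤ νy i) ∧
  ‖gradient f x + (∑ i, lam i • gradient (g i) x) + (∑ j, mu j • gradient (h j) x) +
      α • y - νx‖ ≤ ε ∧
  ‖vec (fun i => deriv (p i) (y i) + α * x i - νy i)‖ ≤ ε ∧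
  (∀ i, |min (-(g i x)) (lam i)| ≤ ε) ∧
  ‖vec (fun j => h j x)‖ ≤ ε ∧
  (∀ i, min (x i) (νx i) ≤ ε) ∧
  (∀ i, min (y i) (νy i) ≤ ε)

open Set

lemma ConvexOn.deriv_pos_of_lt {S : Set ℝ} {f : ℝ → ℝ} (hf : ConvexOn ℝ S f) {a b : ℝ}
    (ha : a ∈ S) (hb : b ∈ S) (hab : a < b) (hfab : f a < f b) (hd : DifferentiableAt ℝ f b) :
    0 < deriv f b :=
  ((slope_pos_iff_of_le hab.le).2 hfab).trans_le (hf.slope_le_deriv ha hb hab hd)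

lemma map_atTop_eq_inf_principal_range {ψ : ℕ → ℕ} (hψ : StrictMono ψ) :
    map ψ atTop = atTop ⊓ 𝓟 (range ψ) := by
  rw [← map_comap, comap_embedding_atTop (fun _ _ => hψ.le_iff_le) fun c => ⟨c, hψ.id_le c⟩]

lemma IsCompact.exists_infinite_subset_tendsto {X : Type*} [TopologicalSpace X]
    [FirstCountableTopology X] {s : Set X} (hs : IsCompact s) {u : ℕ → X}
    (hu : ∀ᶠ k in atTop, u k ∈ s) {K : Set ℕ} (hK : K.Infinite) :
    ∃ K' a, K' ⊆ K ∧ K'.Infinite ∧ Tendsto u (atTop ⊓ 𝓟 K') (𝓝 a) := by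
  have hφ : StrictMono (Nat.nth (· ∈ K)) := Nat.nth_strictMono hK
  obtain ⟨a, -, σ, hσ, hua⟩ :=
    hs.tendsto_subseq' (x := u ∘ Nat.nth (· ∈ K)) (hφ.tendsto_atTop.eventually hu).frequently
  refine ⟨range (Nat.nth (· ∈ K) ∘ σ), a, ?_,
    infinite_range_of_injective (hφ.comp hσ).injective, ?_⟩
  · rintro _ ⟨j, rfl⟩
    exact Nat.nth_mem_of_infinite hK _
  · rwa [← map_atTop_eq_inf_principal_range (hφ.comp hσ), tendsto_map'_iff]

section inexactKKT

variable {n m q : ℕ} {f : E n → ℝ} {g : Fin m → E n → ℝ} {h : Fin q → E n → ℝ}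
  {p : Fin n → ℝ → ℝ} {α ε : ℝ} {x y νx νy : E n} {lam : Fin m → ℝ} {mu : Fin q → ℝ}

lemma inexactKKT.deriv_add_mul_le (hKKT : inexactKKT f g h p α ε x y νx νy lam mu)
    {i : Fin n} (hy : ε < y i) : deriv (p i) (y i) + α * x i ≤ 2 * ε := by
  obtain ⟨-, -, -, -, -, -, hstat, -, -, -, hcompl⟩ := hKKT
  have hν : νy i ≤ ε := (min_le_iff.mp (hcompl i)).resolve_left hy.not_ge
  have hstat_i : |deriv (p i) (y i) + α * x i - νy i| ≤ ε :=
    (PiLp.norm_apply_le _ i).trans hstat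
  linarith [(abs_le.mp hstat_i).2]

lemma inexactKKT.apply_le_max (hKKT : inexactKKT f g h p α ε x y νx νy lam mu) (hα : 0 ≤ α)
    {i : Fin n} (hd : Monotone (deriv (p i))) {t : ℝ} (ht : 2 * ε < deriv (p i) t) :
    y i ≤ max t ε := by
  by_contra! hy
  have hpy := hd (max_lt_iff.1 hy).1.le
  have hαx : 0 ≤ α * x i := mul_nonneg hα (hKKT.1 i)
  linarith [hKKT.deriv_add_mul_le (max_lt_iff.1 hy).2]

lemma apply_mul_apply_eq_zero_of_inexactKKT {l : Filter ℕ} [l.NeBot] {αk εk : ℕ → ℝ}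
    {xk yk νxk νyk : ℕ → E n} {lamk : ℕ → Fin m → ℝ} {muk : ℕ → Fin q → ℝ}
    {xstar ystar : E n} {i : Fin n} (hd : Monotone (deriv (p i)))
    (hα : Tendsto αk l atTop) (hε : Tendsto εk l (𝓝 0))
    (hKKT : ∀ᶠ k in l, inexactKKT f g h p (αk k) (εk k) (xk k) (yk k) (νxk k) (νyk k)
      (lamk k) (muk k))
    (hx : Tendsto xk l (𝓝 xstar)) (hy : Tendsto yk l (𝓝 ystar)) :
    xstar i * ystar i = 0 := by
  have hxi : Tendsto (fun k => xk k i) l (𝓝 (xstar i)) :=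
    ((PiLp.continuous_apply 2 _ i).tendsto _).comp hx
  have hyi : Tendsto (fun k => yk k i) l (𝓝 (ystar i)) :=
    ((PiLp.continuous_apply 2 _ i).tendsto _).comp hy
  have hx0 : 0 ≤ xstar i := ge_of_tendsto hxi (hKKT.mono fun k hk => hk.1 i)
  have hy0 : 0 ≤ ystar i := ge_of_tendsto hyi (hKKT.mono fun k hk => hk.2.1 i)
  by_contra hne
  have hxpos : 0 < xstar i := hx0.lt_of_ne fun h0 => hne (by rw [← h0, zero_mul])
  have hypos : 0 < ystar i := hy0.lt_of_ne fun h0 => hne (by rw [← h0, mul_zero])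
  have hblow : Tendsto (fun k => αk k * xk k i) l atTop := hα.atTop_mul_pos hxpos hxi
  obtain ⟨k, hk, hεy, hyk, hε1, hbig⟩ := (hKKT.and <|
    (hε.eventually (eventually_lt_nhds (half_pos hypos))).and <|
    (hyi.eventually (eventually_gt_nhds (half_lt_self hypos))).and <|
    (hε.eventually (eventually_lt_nhds one_pos)).and <|
    hblow.eventually_gt_atTop (2 - deriv (p i) 0)).exists
  have hpy := hd (hk.2.1 i)
  linarith [hk.deriv_add_mul_le (hεy.trans hyk)]

end inexactKKT

theorem stmt_17_general {n m q : ℕ}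
    (f : E n → ℝ) (g : Fin m → E n → ℝ) (h : Fin q → E n → ℝ)
    (p : Fin n → ℝ → ℝ) (s : Fin n → ℝ)
    (hp : ∀ i, ContDiff ℝ 1 (p i))
    (hconv : ∀ i, ConvexOn ℝ Set.univ (p i))
    (hstrict : ∀ i t, t ≠ s i → p i (s i) < p i t)
    (αk εk : ℕ → ℝ)
    (hα : Tendsto αk atTop atTop) (hε : Tendsto εk atTop (𝓝 0))
    (xk yk νxk νyk : ℕ → E n) (lamk : ℕ → Fin m → ℝ) (muk : ℕ → Fin q → ℝ)
    (hKKT : ∀ k, inexactKKT f g h p (αk k) (εk k) (xk k) (yk k) (νxk k) (νyk k)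
      (lamk k) (muk k))
    (K : Set ℕ) (hK : K.Infinite) (xstar : E n)
    (hconv' : Tendsto xk (atTop ⊓ Filter.principal K) (𝓝 xstar)) :
    ∃ (K' : Set ℕ) (ystar : E n), K' ⊆ K ∧ K'.Infinite ∧
      Tendsto yk (atTop ⊓ Filter.principal K') (𝓝 ystar) ∧
      ∀ i, xstar i * ystar i = 0 := by
  have hd : ∀ i, Differentiable ℝ (p i) := fun i => (hp i).differentiable one_ne_zero
  have hmono : ∀ i, Monotone (deriv (p i)) := fun i =>
    monotoneOn_univ.mp ((hconv i).monotoneOn_deriv fun x _ => hd i x)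
  have hpos : ∀ i, 0 < deriv (p i) (s i + 1) := fun i =>
    (hconv i).deriv_pos_of_lt trivial trivial (lt_add_one _)
      (hstrict i _ (by linarith)) (hd i _)
  set box : Set (E n) :=
    EuclideanSpace.equiv (Fin n) ℝ ⁻¹' univ.pi fun i => Icc 0 (max (s i + 1) 1)
  have hbox : IsCompact box := (EuclideanSpace.equiv (Fin n) ℝ).toHomeomorph.isCompact_preimage.2
    (isCompact_univ_pi fun _ => isCompact_Icc)
  have hbdd : ∀ᶠ k in atTop, yk k ∈ box := by
    filter_upwards [hα.eventually_ge_atTop 0, hε.eventually (eventually_le_nhds zero_lt_one),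
      eventually_all.2 fun i => hε.eventually (eventually_lt_nhds (half_pos (hpos i)))]
      with k hαk hε1 hεi i _
    exact ⟨(hKKT k).2.1 i, ((hKKT k).apply_le_max hαk (hmono i) (by linarith [hεi i])).trans
      (max_le_max le_rfl hε1)⟩
  obtain ⟨K', ystar, hK'K, hK', hy⟩ := hbox.exists_infinite_subset_tendsto hbdd hK
  have : (atTop ⊓ 𝓟 K').NeBot := frequently_iff_neBot.1 (Nat.frequently_atTop_iff_infinite.2 hK')
  refine ⟨K', ystar, hK'K, hK', hy, fun i => ?_⟩
  exact apply_mul_apply_eq_zero_of_inexactKKT (hmono i) (hα.mono_left inf_le_left)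
    (hε.mono_left inf_le_left) (Eventually.of_forall hKKT)
    (hconv'.mono_left (inf_le_inf_left _ (principal_mono.2 hK'K))) hy

/-- accumulation points of the exact penalty method are feasible
for the complementarity constraint. -/
theorem stmt_17 {n m q : ℕ} (hn : 1 ≤ n) {ρ : ℝ} (hρ : 0 < ρ)
    (f : E n → ℝ) (g : Fin m → E n → ℝ) (h : Fin q → E n → ℝ)
    (hf : ContDiff ℝ 1 f) (hg : ∀ i, ContDiff ℝ 1 (g i)) (hh : ∀ j, ContDiff ℝ 1 (h j))
    (p : Fin n → ℝ → ℝ) (s : Fin n → ℝ)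
    (hp : ∀ i, ContDiff ℝ 1 (p i))
    (hconv : ∀ i, ConvexOn ℝ Set.univ (p i))
    (hspos : ∀ i, 0 < s i)
    (hmin : ∀ i t, p i (s i) ≤ p i t)
    (hstrict : ∀ i t, t ≠ s i → p i (s i) < p i t)
    (hscale : ∀ i, p i 0 - p i (s i) = ρ)
    (αk εk : ℕ → ℝ) (hαpos : ∀ k, 0 < αk k) (hεnn : ∀ k, 0 ≤ εk k)
    (hα : Tendsto αk atTop atTop) (hε : Tendsto εk atTop (𝓝 0))
    (xk yk νxk νyk : ℕ → E n) (lamk : ℕ → Fin m → ℝ) (muk : ℕ → Fin q → ℝ)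
    (hKKT : ∀ k, inexactKKT f g h p (αk k) (εk k) (xk k) (yk k) (νxk k) (νyk k)
      (lamk k) (muk k))
    (K : Set ℕ) (hK : K.Infinite) (xstar : E n)
    (hconv' : Tendsto xk (atTop ⊓ Filter.principal K) (𝓝 xstar)) :
    ∃ (K' : Set ℕ) (ystar : E n), K' ⊆ K ∧ K'.Infinite ∧
      Tendsto yk (atTop ⊓ Filter.principal K') (𝓝 ystar) ∧
      ∀ i, xstar i * ystar i = 0 :=
  stmt_17_general f g h p s hp hconv hstrict αk εk hα hε xk yk νxk νyk lamk muk hKKT K hK xstar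
    hconv'
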